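/- Let H be a subloop of 𝒥(R) with [𝒥(R),H] ⊆ H. Then: (1) 𝔥_{n+1}(H) ⊆ 𝔥_{n+2}(H) for all n ≥ 1, and 𝔥_1(H) ⊆ 𝔥_3(H); (2) R·𝔥_n(H)·R ⊆ 𝔥_{n+2}(H) for all n ≥ 1, i.e. βαγ ∈ 𝔥_{n+2}(H) whenever β, γ ∈ R and α ∈ 𝔥_n(H). -/

import Mathlib

open PowerSeries

/-- The set `𝒥(R)` of formal power series `t + ∑_{i≥1} α_i t^{i+1}`. -/
def Jset (R : Type*) [Ring R] : Set (PowerSeries R) :=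
  {f | coeff 0 f = 0 ∧ coeff 1 f = 1}

/-- The substitution product `f ∘ g = ∑_{m ≥ 0} α_m g^{m+1}`, defined coefficientwise. -/
noncomputable def Jcomp {R : Type*} [Ring R] (f g : PowerSeries R) : PowerSeries R :=
  PowerSeries.mk fun k => ∑ m ∈ Finset.range k, coeff (m + 1) f * coeff k (g ^ (m + 1))

/-- `f ≡ g (mod 𝒥_n(R))`: the coefficients of `t^{i+1}` coincide for `1 ≤ i ≤ n − 1`. -/
def JModEq {R : Type*} [Ring R] (n : ℕ) (f g : PowerSeries R) : Prop :=
  ∀ i, 1 ≤ i → i < n → coeff (i + 1) f = coeff (i + 1) g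

/-- `𝔥_n(H) = {α ∈ R ∣ ∃ h ∈ H, h ≡ t + α t^{n+1} (mod 𝒥_{n+1}(R))}`. -/
def hSet {R : Type*} [Ring R] (H : Set (PowerSeries R)) (n : ℕ) : Set R :=
  {α | ∃ h ∈ H, JModEq (n + 1) h (X + monomial (n + 1) α)}

/-!
Let `h ∈ H` with `h ≡ t + α t^{n+1}` and `f = t + β t^{m+1}` (`t` is `X` below). As `t` is central
in `R⟦t⟧`, congruences modulo powers of `t` behave as in the commutative case, and
`f ∘ h ≡ h + β t^{m+1} + (m+1) β α t^{m+n+1}`, `h ∘ f ≡ h + β t^{m+1} + (n+1) α β t^{m+n+1}`.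
Hence the commutator `[f,h] ∈ H` is `≡ t + ((m+1) β α - (n+1) α β) t^{m+n+1}`, so
`(m+1) β α - (n+1) α β ∈ 𝔥_{m+n}(H)`; moreover each `𝔥_N(H)` is an additive subgroup of `R`, since
composition adds leading coefficients. Scalars `β ∈ K` give `𝔥_{n+1} ⊆ 𝔥_{n+2}` and `𝔥_1 ⊆ 𝔥_3`.
Comparing `m = 1` with `m = 2` gives `R α ∪ α R ⊆ 𝔥_{n+2}`; applying the commutator identity once
more to `2 β α - (n+1) α β ∈ 𝔥_{n+1}` and symmetrising in `β, γ` leaves `2(2n+3) β α γ ∈ 𝔥_{n+2}`.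
-/

theorem nsmul_inv_natCast_smul {K M : Type*} [DivisionSemiring K] [CharZero K] [AddCommMonoid M]
    [Module K M] {N : ℕ} (hN : N ≠ 0) (x : M) : N • ((N : K)⁻¹ • x) = x := by
  rw [← Nat.cast_smul_eq_nsmul K, smul_inv_smul₀ (Nat.cast_ne_zero.mpr hN)]

namespace PowerSeries

theorem X_pow_dvd_mul_of_le {R : Type*} [Semiring R] {a b N : ℕ} {f g : R⟦X⟧}
    (hf : X ^ a ∣ f) (hg : X ^ b ∣ g) (hN : N ≤ a + b) : (X : R⟦X⟧) ^ N ∣ f * g := by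
  obtain ⟨f, rfl⟩ := hf
  obtain ⟨g, rfl⟩ := hg
  refine dvd_trans (pow_dvd_pow X hN) ⟨f * g, ?_⟩
  rw [pow_add, mul_assoc, ← mul_assoc f, ← X_pow_mul, mul_assoc, mul_assoc]

theorem X_pow_dvd_monomial {R : Type*} [Semiring R] {k n : ℕ} (h : k ≤ n) (a : R) :
    (X : R⟦X⟧) ^ k ∣ monomial n a :=
  X_pow_dvd_iff.mpr fun m hm => by rw [coeff_monomial, if_neg (by omega)]

theorem X_pow_dvd_pow {R : Type*} [Semiring R] {f : R⟦X⟧} (hf : X ∣ f) (j : ℕ) :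
    X ^ j ∣ f ^ j := by
  obtain ⟨f, rfl⟩ := hf
  exact ⟨f ^ j, (commute_X f).symm.mul_pow _⟩

variable {R : Type*} [Ring R]

theorem X_pow_dvd_sub_X {n : ℕ} {a : R} {g : R⟦X⟧}
    (hg : X ^ (n + 2) ∣ g - (X + monomial (n + 1) a)) : X ^ (n + 1) ∣ g - X := by
  rw [show g - X = g - (X + monomial (n + 1) a) + monomial (n + 1) a by abel]
  exact dvd_add (dvd_trans (pow_dvd_pow X (by omega)) hg) (X_pow_dvd_monomial le_rfl a)

theorem X_pow_add_dvd_pow_sub_pow {k : ℕ} {f g : R⟦X⟧} (hf : X ∣ f) (hg : X ∣ g)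
    (hfg : X ^ k ∣ f - g) (j : ℕ) : X ^ (k + j) ∣ f ^ (j + 1) - g ^ (j + 1) := by
  induction j with
  | zero => simpa using hfg
  | succ j ih =>
    rw [pow_succ' f, pow_succ' g,
      show f * f ^ (j + 1) - g * g ^ (j + 1) =
        f * (f ^ (j + 1) - g ^ (j + 1)) + (f - g) * g ^ (j + 1) by noncomm_ring]
    exact dvd_add (X_pow_dvd_mul_of_le (by rwa [pow_one]) ih (by omega))
      (X_pow_dvd_mul_of_le hfg (X_pow_dvd_pow hg (j + 1)) (by omega))

theorem X_pow_dvd_X_add_pow_sub {n : ℕ} {e : R⟦X⟧} (he : X ^ (n + 1) ∣ e) (hn : 1 ≤ n) (m : ℕ) :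
    X ^ (m + n + 2) ∣ (X + e) ^ (m + 1) - X ^ (m + 1) - (m + 1) • (X ^ m * e) := by
  induction m with
  | zero => simp
  | succ m ih =>
    have key : (X + e) ^ (m + 1 + 1) - X ^ (m + 1 + 1) - (m + 1 + 1) • (X ^ (m + 1) * e) =
        ((X + e) ^ (m + 1) - X ^ (m + 1) - (m + 1) • (X ^ m * e)) * (X + e) +
          (m + 1) • (X ^ m * (e * e)) := by
      have hXe : (X : R⟦X⟧) * e = e * X := X_mul
      rw [pow_succ (X + e) (m + 1), pow_succ X (m + 1), pow_succ X m, succ_nsmul _ (m + 1),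
        ← sub_eq_zero]
      generalize (X + e : R⟦X⟧) ^ (m + 1) = Q
      generalize (X : R⟦X⟧) ^ m = P
      rw [show Q * (X + e) - P * X * X - ((m + 1) • (P * X * e) + P * X * e) -
          ((Q - P * X - (m + 1) • (P * e)) * (X + e) + (m + 1) • (P * (e * e))) =
          (m + 1) • (P * (e * X)) - (m + 1) • (P * (X * e)) by noncomm_ring, hXe, sub_self]
    have hX : X ^ 1 ∣ X + e := by
      rw [pow_one]; exact dvd_add dvd_rfl (dvd_trans (dvd_pow_self X (by omega)) he)
    have hee : X ^ (m + 1 + n + 2) ∣ X ^ m * (e * e) :=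
      X_pow_dvd_mul_of_le (dvd_refl _) (X_pow_dvd_mul_of_le he he le_rfl) (by omega)
    rw [key]
    exact dvd_add (X_pow_dvd_mul_of_le ih hX (by omega)) (dvd_nsmul_of_dvd _ hee)

theorem X_pow_dvd_pow_sub_monomial {n : ℕ} {a : R} {g : R⟦X⟧}
    (hg : X ^ (n + 2) ∣ g - (X + monomial (n + 1) a)) (hn : 1 ≤ n) (m : ℕ) :
    X ^ (m + n + 2) ∣ g ^ (m + 1) - (X ^ (m + 1) + monomial (m + n + 1) ((m + 1) • a)) := by
  have hlin : X ^ (m + n + 2) ∣ X ^ m * (g - X) - monomial (m + n + 1) a := by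
    rw [show monomial (m + n + 1) a = X ^ m * monomial (n + 1) a by
      rw [X_pow_eq, monomial_mul_monomial, one_mul, add_assoc], ← mul_sub, sub_sub]
    exact X_pow_dvd_mul_of_le (dvd_refl _) hg (by omega)
  have := dvd_add (X_pow_dvd_X_add_pow_sub (X_pow_dvd_sub_X hg) hn m)
    (dvd_nsmul_of_dvd (m + 1) hlin)
  convert this using 1
  rw [map_nsmul, smul_sub, add_sub_cancel]
  abel

end PowerSeries

section Jset

variable {R : Type*} [Ring R]

theorem mem_Jset_iff {f : R⟦X⟧} : f ∈ Jset R ↔ X ^ 2 ∣ f - X := by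
  simp only [Jset, X_pow_dvd_iff, map_sub, coeff_X, sub_eq_zero]
  constructor
  · rintro ⟨h0, h1⟩ (_ | _ | k) hk
    · simpa using h0
    · simpa using h1
    · omega
  · intro h
    exact ⟨by simpa using h 0 (by omega), by simpa using h 1 (by omega)⟩

theorem X_dvd_of_mem_Jset {f : R⟦X⟧} (hf : f ∈ Jset R) : X ∣ f :=
  X_dvd_iff.mpr (by simpa using hf.1)

theorem JModEq_iff_X_pow_dvd {N : ℕ} {f g : R⟦X⟧} (hf : f ∈ Jset R) (hg : g ∈ Jset R) :
    JModEq N f g ↔ X ^ (N + 1) ∣ f - g := by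
  simp only [JModEq, X_pow_dvd_iff, map_sub, sub_eq_zero]
  constructor
  · rintro h (_ | _ | i) hi
    · rw [hf.1, hg.1]
    · rw [hf.2, hg.2]
    · exact h (i + 1) (by omega) (by omega)
  · exact fun h i _ hi => h (i + 1) (by omega)

theorem X_add_monomial_mem_Jset {n : ℕ} (hn : 1 ≤ n) (a : R) :
    X + monomial (n + 1) a ∈ Jset R := by
  rw [mem_Jset_iff, add_sub_cancel_left]
  exact X_pow_dvd_monomial (by omega) a

end Jset

section Jcomp

variable {R : Type*} [Ring R]

theorem coeff_Jcomp (f g : R⟦X⟧) (k : ℕ) :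
    coeff k (Jcomp f g) = ∑ m ∈ Finset.range k, coeff (m + 1) f * coeff k (g ^ (m + 1)) :=
  coeff_mk _ _

theorem Jcomp_mem_Jset {f g : R⟦X⟧} (hf : f ∈ Jset R) (hg : g ∈ Jset R) : Jcomp f g ∈ Jset R :=
  ⟨by simp [coeff_Jcomp], by simp [coeff_Jcomp, hf.2, hg.2]⟩

theorem Jcomp_add_left (f f' g : R⟦X⟧) : Jcomp (f + f') g = Jcomp f g + Jcomp f' g := by
  ext k
  simp only [coeff_Jcomp, map_add, add_mul, Finset.sum_add_distrib]

theorem Jcomp_sub_left (f f' g : R⟦X⟧) : Jcomp (f - f') g = Jcomp f g - Jcomp f' g := by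
  ext k
  simp only [coeff_Jcomp, map_sub, sub_mul, Finset.sum_sub_distrib]

theorem Jcomp_monomial_left {g : R⟦X⟧} (hg : X ∣ g) (j : ℕ) (a : R) :
    Jcomp (monomial (j + 1) a) g = C a * g ^ (j + 1) := by
  ext k
  simp only [coeff_Jcomp, coeff_C_mul, coeff_monomial, Nat.add_right_cancel_iff, ite_mul,
    zero_mul, Finset.sum_ite_eq', Finset.mem_range]
  split_ifs with hjk
  · rfl
  · rw [X_pow_dvd_iff.mp (X_pow_dvd_pow hg (j + 1)) k (by omega), mul_zero]

theorem Jcomp_X_left {g : R⟦X⟧} (hg : X ∣ g) : Jcomp X g = g := by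
  simpa [← X_eq] using Jcomp_monomial_left hg 0 1

theorem Jcomp_X_right {f : R⟦X⟧} (hf : X ∣ f) : Jcomp f X = f := by
  ext k
  simp only [coeff_Jcomp, coeff_X_pow, mul_ite, mul_one, mul_zero]
  rcases k with _ | k
  · simpa using (X_dvd_iff.mp hf).symm
  · simp [Finset.sum_ite_eq]

theorem X_pow_dvd_Jcomp_sub_Jcomp {d k : ℕ} {g f f' : R⟦X⟧} (hg : X ^ (d + 1) ∣ g)
    (hf : X ∣ f) (hf' : X ∣ f') (hff' : X ^ k ∣ f - f') :
    X ^ (k + d) ∣ Jcomp g f - Jcomp g f' := by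
  rw [X_pow_dvd_iff] at hg ⊢
  intro i hi
  rw [map_sub, coeff_Jcomp, coeff_Jcomp, ← Finset.sum_sub_distrib]
  refine Finset.sum_eq_zero fun j _ => ?_
  rw [← mul_sub]
  rcases lt_or_ge j d with hj | hj
  · rw [hg _ (by omega), zero_mul]
  · rw [← map_sub, X_pow_dvd_iff.mp (X_pow_add_dvd_pow_sub_pow hf hf' hff' j) i (by omega),
      mul_zero]

theorem X_pow_dvd_Jcomp_sub_Jcomp_sub {k : ℕ} {u f f' : R⟦X⟧} (hu : u ∈ Jset R)
    (hf : X ∣ f) (hf' : X ∣ f') (hff' : X ^ k ∣ f - f') :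
    X ^ (k + 1) ∣ Jcomp u f - Jcomp u f' - (f - f') := by
  have := X_pow_dvd_Jcomp_sub_Jcomp (d := 1) (mem_Jset_iff.mp hu) hf hf' hff'
  rwa [Jcomp_sub_left, Jcomp_sub_left, Jcomp_X_left hf, Jcomp_X_left hf',
    show Jcomp u f - f - (Jcomp u f' - f') = Jcomp u f - Jcomp u f' - (f - f') by abel] at this

end Jcomp

section LeftDivision

variable {R : Type*} [Ring R]

theorem X_pow_dvd_sub_of_Jcomp_eq {N : ℕ} {u v w : R⟦X⟧} (hu : u ∈ Jset R) (hw : X ∣ w)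
    (huw : Jcomp u w = v) (huv : X ^ N ∣ v - u) : X ^ (N + 1) ∣ w - X - (v - u) := by
  have step : ∀ k, X ^ k ∣ w - X → X ^ (k + 1) ∣ (v - u) - (w - X) := fun k hk => by
    simpa [← huw, Jcomp_X_right (X_dvd_of_mem_Jset hu)] using
      X_pow_dvd_Jcomp_sub_Jcomp_sub hu hw dvd_rfl hk
  have hwX : ∀ k ≤ N, X ^ k ∣ w - X := by
    intro k
    induction k with
    | zero => simp
    | succ k ih =>
      intro hk
      simpa using dvd_sub (dvd_trans (pow_dvd_pow X hk) huv) (step k (ih (by omega)))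
  exact dvd_sub_comm.mp (step N (hwX N le_rfl))

/-- Each step `w ↦ w + (v - u ∘ w)` fixes one more coefficient of the solution of `u ∘ w = v`. -/
noncomputable def JcompSolveSeq (u v : R⟦X⟧) : ℕ → R⟦X⟧
  | 0 => X
  | i + 1 => JcompSolveSeq u v i + (v - Jcomp u (JcompSolveSeq u v i))

theorem JcompSolveSeq_spec {u v : R⟦X⟧} (hu : u ∈ Jset R) (hv : v ∈ Jset R) (i : ℕ) :
    JcompSolveSeq u v i ∈ Jset R ∧ X ^ (i + 2) ∣ v - Jcomp u (JcompSolveSeq u v i) := by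
  induction i with
  | zero =>
    refine ⟨mem_Jset_iff.mpr (by simp [JcompSolveSeq]), ?_⟩
    rw [JcompSolveSeq, Jcomp_X_right (X_dvd_of_mem_Jset hu), ← sub_sub_sub_cancel_right v u X]
    exact dvd_sub (mem_Jset_iff.mp hv) (mem_Jset_iff.mp hu)
  | succ i ih =>
    obtain ⟨hs, hr⟩ := ih
    set s := JcompSolveSeq u v i
    have hs' : s + (v - Jcomp u s) ∈ Jset R := by
      rw [mem_Jset_iff, add_sub_right_comm]
      exact dvd_add (mem_Jset_iff.mp hs) (dvd_trans (pow_dvd_pow X (by omega)) hr)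
    refine ⟨hs', dvd_sub_comm.mp (?_ : X ^ (i + 2 + 1) ∣ Jcomp u (s + (v - Jcomp u s)) - v)⟩
    simpa using X_pow_dvd_Jcomp_sub_Jcomp_sub hu (X_dvd_of_mem_Jset hs') (X_dvd_of_mem_Jset hs)
      (by simpa using hr)

theorem exists_Jcomp_eq {u v : R⟦X⟧} (hu : u ∈ Jset R) (hv : v ∈ Jset R) :
    ∃ w ∈ Jset R, Jcomp u w = v := by
  set s := JcompSolveSeq u v
  have hs := JcompSolveSeq_spec hu hv
  have hcauchy : ∀ i j, i ≤ j → X ^ (i + 2) ∣ s j - s i := by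
    intro i j hij
    induction j, hij using Nat.le_induction with
    | base => simp
    | succ j hij ih =>
      rw [show s (j + 1) = s j + (v - Jcomp u (s j)) from rfl, add_sub_right_comm]
      exact dvd_add ih (dvd_trans (pow_dvd_pow X (by omega)) (hs j).2)
  set w := PowerSeries.mk fun k => coeff k (s k)
  have hw : ∀ i, X ^ (i + 2) ∣ w - s i := by
    refine fun i => X_pow_dvd_iff.mpr fun k hk => ?_
    rw [map_sub, coeff_mk, sub_eq_zero]
    rcases le_total k i with hki | hik
    · exact (sub_eq_zero.mp (X_pow_dvd_iff.mp (hcauchy k i hki) k (by omega))).symm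
    · exact sub_eq_zero.mp (X_pow_dvd_iff.mp (hcauchy i k hik) k hk)
  refine ⟨w, mem_Jset_iff.mpr (hw 0), ?_⟩
  ext k
  have hX : X ∣ w := by
    rw [← sub_add_cancel w (s k)]
    exact dvd_add (dvd_trans (dvd_pow_self X (by omega)) (hw k)) (X_dvd_of_mem_Jset (hs k).1)
  have := dvd_sub (hs k).2 (X_pow_dvd_Jcomp_sub_Jcomp (d := 0)
    (by simpa using X_dvd_of_mem_Jset hu) hX (X_dvd_of_mem_Jset (hs k).1) (hw k))
  rw [sub_sub_sub_cancel_right] at this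
  exact (sub_eq_zero.mp (X_pow_dvd_iff.mp this k (by omega))).symm

end LeftDivision

section Compositions

variable {R : Type*} [Ring R]

theorem X_pow_dvd_Jcomp_X_add_monomial_left_sub {n : ℕ} {α : R} {h : R⟦X⟧}
    (hh : X ^ (n + 2) ∣ h - (X + monomial (n + 1) α)) (hn : 1 ≤ n) (m : ℕ) (β : R) :
    X ^ (m + n + 2) ∣ Jcomp (X + monomial (m + 1) β) h -
      (h + monomial (m + 1) β + monomial (m + n + 1) ((m + 1) • (β * α))) := by
  have hX : X ∣ h := by
    rw [← sub_add_cancel h X]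
    exact dvd_add (dvd_trans (dvd_pow_self X (by omega)) (X_pow_dvd_sub_X hh)) dvd_rfl
  have key : Jcomp (X + monomial (m + 1) β) h -
      (h + monomial (m + 1) β + monomial (m + n + 1) ((m + 1) • (β * α))) =
      C β * (h ^ (m + 1) - (X ^ (m + 1) + monomial (m + n + 1) ((m + 1) • α))) := by
    rw [Jcomp_add_left, Jcomp_X_left hX, Jcomp_monomial_left hX, mul_sub, mul_add,
      ← monomial_eq_C_mul_X_pow, ← monomial_zero_eq_C_apply, monomial_mul_monomial, zero_add,
      mul_smul_comm]
    abel
  rw [key]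
  exact X_pow_dvd_mul_of_le (a := 0) (by simp) (X_pow_dvd_pow_sub_monomial hh hn m) (by omega)

theorem X_pow_dvd_Jcomp_X_add_monomial_right_sub {n : ℕ} {α : R} {h : R⟦X⟧}
    (hh : X ^ (n + 2) ∣ h - (X + monomial (n + 1) α)) {m : ℕ} (hm : 1 ≤ m) (β : R) :
    X ^ (m + n + 2) ∣ Jcomp h (X + monomial (m + 1) β) -
      (h + monomial (m + 1) β + monomial (m + n + 1) ((n + 1) • (α * β))) := by
  set f := X + monomial (m + 1) β
  set p := X + monomial (n + 1) α
  have hfJ : f ∈ Jset R := X_add_monomial_mem_Jset hm β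
  have hf : X ∣ f := X_dvd_of_mem_Jset hfJ
  have hfX : X ^ (m + 1) ∣ f - X := by
    rw [add_sub_cancel_left]; exact X_pow_dvd_monomial le_rfl β
  have hhp : X ^ (m + n + 2) ∣ Jcomp (h - p) f - (h - p) := by
    have := X_pow_dvd_Jcomp_sub_Jcomp (d := n + 1) hh hf dvd_rfl hfX
    rwa [Jcomp_X_right (dvd_trans (dvd_pow_self X (by omega)) hh),
      show m + 1 + (n + 1) = m + n + 2 by omega] at this
  have hpow := X_pow_dvd_pow_sub_monomial (g := f) (by rw [sub_self]; exact dvd_zero _) hm n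
  rw [add_comm n m] at hpow
  have key : Jcomp h f - (h + monomial (m + 1) β + monomial (m + n + 1) ((n + 1) • (α * β))) =
      (Jcomp (h - p) f - (h - p)) +
        C α * (f ^ (n + 1) - (X ^ (n + 1) + monomial (m + n + 1) ((n + 1) • β))) := by
    rw [Jcomp_sub_left, Jcomp_add_left, Jcomp_X_left hf, Jcomp_monomial_left hf, mul_sub,
      mul_add, ← monomial_eq_C_mul_X_pow, ← monomial_zero_eq_C_apply, monomial_mul_monomial,
      zero_add, mul_smul_comm]
    simp only [f, p]
    abel
  rw [key]
  exact dvd_add hhp (X_pow_dvd_mul_of_le (a := 0) (by simp) hpow (by omega))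

end Compositions

section hSet

variable {R : Type*} [Ring R] {H : Set R⟦X⟧}

theorem mem_hSet_iff (hHJ : H ⊆ Jset R) {n : ℕ} (hn : 1 ≤ n) {α : R} :
    α ∈ hSet H n ↔ ∃ h ∈ H, X ^ (n + 2) ∣ h - (X + monomial (n + 1) α) := by
  refine exists_congr fun h => and_congr_right fun hH => ?_
  exact JModEq_iff_X_pow_dvd (hHJ hH) (X_add_monomial_mem_Jset hn α)

theorem hSet_add (hHJ : H ⊆ Jset R) (hHmul : ∀ f ∈ H, ∀ g ∈ H, Jcomp f g ∈ H) {N : ℕ}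
    (hN : 1 ≤ N) {a b : R} (ha : a ∈ hSet H N) (hb : b ∈ hSet H N) : a + b ∈ hSet H N := by
  rw [mem_hSet_iff hHJ hN] at ha hb ⊢
  obtain ⟨f, hfH, hf⟩ := ha
  obtain ⟨g, hgH, hg⟩ := hb
  have hgX : X ∣ g := X_dvd_of_mem_Jset (hHJ hgH)
  have hfg := X_pow_dvd_Jcomp_sub_Jcomp (X_pow_dvd_sub_X hf) hgX dvd_rfl (X_pow_dvd_sub_X hg)
  rw [Jcomp_X_right (dvd_trans (dvd_pow_self X (by omega)) (X_pow_dvd_sub_X hf)),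
    Jcomp_sub_left, Jcomp_X_left hgX] at hfg
  refine ⟨Jcomp f g, hHmul f hfH g hgH, ?_⟩
  rw [show Jcomp f g - (X + monomial (N + 1) (a + b)) =
      (Jcomp f g - g - (f - X)) + (f - (X + monomial (N + 1) a)) +
        (g - (X + monomial (N + 1) b)) by rw [map_add]; abel]
  exact dvd_add (dvd_add (dvd_trans (pow_dvd_pow X (by omega)) hfg) hf) hg

theorem hSet_neg (hHJ : H ⊆ Jset R) (hHt : X ∈ H)
    (hHld : ∀ f ∈ H, ∀ g ∈ H, ∀ w ∈ Jset R, Jcomp f w = g → w ∈ H) {N : ℕ} (hN : 1 ≤ N)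
    {a : R} (ha : a ∈ hSet H N) : -a ∈ hSet H N := by
  rw [mem_hSet_iff hHJ hN] at ha ⊢
  obtain ⟨h, hH, hh⟩ := ha
  obtain ⟨w, hwJ, hw⟩ := exists_Jcomp_eq (hHJ hH) (hHJ hHt)
  refine ⟨w, hHld h hH X hHt w hwJ hw, ?_⟩
  have := X_pow_dvd_sub_of_Jcomp_eq (hHJ hH) (X_dvd_of_mem_Jset hwJ) hw
    (dvd_sub_comm.mp (X_pow_dvd_sub_X hh))
  rw [show w - (X + monomial (N + 1) (-a)) = (w - X - (X - h)) - (h - (X + monomial (N + 1) a)) by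
    rw [map_neg]; abel]
  exact dvd_sub this hh

def hSetAddSubgroup (hHJ : H ⊆ Jset R) (hHt : X ∈ H) (hHmul : ∀ f ∈ H, ∀ g ∈ H, Jcomp f g ∈ H)
    (hHld : ∀ f ∈ H, ∀ g ∈ H, ∀ w ∈ Jset R, Jcomp f w = g → w ∈ H) {N : ℕ} (hN : 1 ≤ N) :
    AddSubgroup R where
  carrier := hSet H N
  add_mem' := hSet_add hHJ hHmul hN
  zero_mem' := (mem_hSet_iff hHJ hN).mpr ⟨X, hHt, by simp⟩
  neg_mem' := hSet_neg hHJ hHt hHld hN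

theorem commutator_mem_hSet (hHJ : H ⊆ Jset R)
    (hnorm : ∀ f ∈ Jset R, ∀ h ∈ H, ∀ w ∈ Jset R, Jcomp (Jcomp h f) w = Jcomp f h → w ∈ H)
    {n m : ℕ} (hn : 1 ≤ n) (hm : 1 ≤ m) {α : R} (hα : α ∈ hSet H n) (β : R) :
    (m + 1) • (β * α) - (n + 1) • (α * β) ∈ hSet H (m + n) := by
  rw [mem_hSet_iff hHJ hn] at hα
  rw [mem_hSet_iff hHJ (by omega)]
  obtain ⟨h, hH, hh⟩ := hα
  set f := X + monomial (m + 1) β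
  have hfJ : f ∈ Jset R := X_add_monomial_mem_Jset hm β
  obtain ⟨w, hwJ, hw⟩ := exists_Jcomp_eq (Jcomp_mem_Jset (hHJ hH) hfJ) (Jcomp_mem_Jset hfJ (hHJ hH))
  refine ⟨w, hnorm f hfJ h hH w hwJ hw, ?_⟩
  have hvu := dvd_sub (X_pow_dvd_Jcomp_X_add_monomial_left_sub hh hn m β)
    (X_pow_dvd_Jcomp_X_add_monomial_right_sub hh hm β)
  rw [sub_sub_sub_comm, add_sub_add_left_eq_sub, ← map_sub] at hvu
  set γ := (m + 1) • (β * α) - (n + 1) • (α * β)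
  have hvu' : X ^ (m + n + 1) ∣ Jcomp f h - Jcomp h f := by
    simpa using dvd_add (dvd_trans (pow_dvd_pow X (Nat.le_succ _)) hvu)
      (X_pow_dvd_monomial le_rfl γ)
  have hdiv := X_pow_dvd_sub_of_Jcomp_eq (Jcomp_mem_Jset (hHJ hH) hfJ) (X_dvd_of_mem_Jset hwJ) hw
    hvu'
  rw [show w - (X + monomial (m + n + 1) γ) =
      (w - X - (Jcomp f h - Jcomp h f)) + (Jcomp f h - Jcomp h f - monomial (m + n + 1) γ)
      by abel]
  exact dvd_add hdiv hvu

end hSet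

section Scalars

variable {R : Type*} [Ring R] {H : Set R⟦X⟧}

theorem hSet_subset_hSet_succ (K : Type*) [Field K] [CharZero K] [Algebra K R]
    (hHJ : H ⊆ Jset R)
    (hnorm : ∀ f ∈ Jset R, ∀ h ∈ H, ∀ w ∈ Jset R, Jcomp (Jcomp h f) w = Jcomp f h → w ∈ H)
    {n : ℕ} (hn : 1 ≤ n) : hSet H (n + 1) ⊆ hSet H (n + 2) := by
  intro α hα
  have hn' : (n : K) ≠ 0 := Nat.cast_ne_zero.mpr (by omega)
  have := commutator_mem_hSet hHJ hnorm (m := 1) (by omega) le_rfl hα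
    (algebraMap K R (-(n : K)⁻¹))
  rwa [← Algebra.smul_def, ← Algebra.commutes, ← Algebra.smul_def, ← Nat.cast_smul_eq_nsmul K,
    ← Nat.cast_smul_eq_nsmul K, smul_smul, smul_smul, ← sub_smul,
    show ((1 + 1 : ℕ) : K) * -(n : K)⁻¹ - ((n + 1 + 1 : ℕ) : K) * -(n : K)⁻¹ = 1 by
      push_cast; field_simp; ring, one_smul, add_comm 1] at this

theorem hSet_one_subset_hSet_three (hHJ : H ⊆ Jset R)
    (hnorm : ∀ f ∈ Jset R, ∀ h ∈ H, ∀ w ∈ Jset R, Jcomp (Jcomp h f) w = Jcomp f h → w ∈ H) :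
    hSet H 1 ⊆ hSet H 3 := by
  intro α hα
  have := commutator_mem_hSet hHJ hnorm (m := 2) le_rfl (by omega) hα 1
  rwa [one_mul, mul_one, show (2 + 1) • α - (1 + 1) • α = α by abel] at this

theorem mul_mem_hSet_add_two (K : Type*) [Field K] [CharZero K] [Algebra K R]
    (hHJ : H ⊆ Jset R) (hHt : X ∈ H) (hHmul : ∀ f ∈ H, ∀ g ∈ H, Jcomp f g ∈ H)
    (hHld : ∀ f ∈ H, ∀ g ∈ H, ∀ w ∈ Jset R, Jcomp f w = g → w ∈ H)
    (hnorm : ∀ f ∈ Jset R, ∀ h ∈ H, ∀ w ∈ Jset R, Jcomp (Jcomp h f) w = Jcomp f h → w ∈ H)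
    {n : ℕ} (hn : 1 ≤ n) {α : R} (hα : α ∈ hSet H n) (β γ : R) :
    β * α * γ ∈ hSet H (n + 2) := by
  set S := hSetAddSubgroup hHJ hHt hHmul hHld (N := n + 2) (by omega)
  have hcomm₁ : ∀ δ, (1 + 1) • (δ * α) - (n + 1) • (α * δ) ∈ hSet H (n + 1) := fun δ => by
    have := commutator_mem_hSet hHJ hnorm (m := 1) hn le_rfl hα δ
    rwa [add_comm 1] at this
  have hcomm₂ : ∀ δ, (2 + 1) • (δ * α) - (n + 1) • (α * δ) ∈ S := fun δ => by
    have := commutator_mem_hSet hHJ hnorm (m := 2) hn (by omega) hα δ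
    rwa [add_comm 2] at this
  have hleft : ∀ δ, δ * α ∈ S := fun δ => by
    convert S.sub_mem (hcomm₂ δ) (hSet_subset_hSet_succ K hHJ hnorm hn (hcomm₁ δ)) using 1
    abel
  have hright : ∀ δ, α * δ ∈ S := fun δ => by
    have := S.sub_mem (S.nsmul_mem (hleft ((n + 1 : K)⁻¹ • δ)) 3) (hcomm₂ ((n + 1 : K)⁻¹ • δ))
    rwa [show 3 • _ - ((2 + 1) • _ - (n + 1) • _) = _ from sub_sub_cancel _ _, mul_smul_comm,
      ← Nat.cast_succ, nsmul_inv_natCast_smul n.succ_ne_zero] at this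
  have hT : ∀ b c, (2 * (n + 1)) • (c * α * b) + (2 * (n + 2)) • (b * α * c) ∈ S := by
    intro b c
    have h := commutator_mem_hSet hHJ hnorm (n := n + 1) (m := 1) (by omega) le_rfl (hcomm₁ b) c
    rw [show 1 + (n + 1) = n + 2 by omega] at h
    convert S.sub_mem (S.add_mem (S.nsmul_mem (hleft (c * b)) 4)
      (S.nsmul_mem (hright (b * c)) ((n + 2) * (n + 1)))) h using 1
    simp only [mul_sub, sub_mul, mul_smul_comm, smul_mul_assoc, mul_assoc, smul_sub, smul_smul]
    module
  have hsymm : ∀ b c, (2 * (2 * n + 3)) • (b * α * c) ∈ S := fun b c => by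
    convert S.sub_mem (S.nsmul_mem (hT b c) (n + 2)) (S.nsmul_mem (hT c b) (n + 1)) using 1
    simp only [smul_add, smul_smul]
    module
  have := hsymm (((2 * (2 * n + 3) : ℕ) : K)⁻¹ • β) γ
  rwa [smul_mul_assoc, smul_mul_assoc, nsmul_inv_natCast_smul (by omega)] at this

end Scalars

theorem statement9_general (K : Type*) [Field K] [CharZero K]
    (R : Type*) [Ring R] [Algebra K R] (H : Set (PowerSeries R))
    (hHJ : H ⊆ Jset R) (hHt : (X : PowerSeries R) ∈ H)
    (hHmul : ∀ f ∈ H, ∀ g ∈ H, Jcomp f g ∈ H)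
    (hHld : ∀ f ∈ H, ∀ g ∈ H, ∀ w ∈ Jset R, Jcomp f w = g → w ∈ H)
    (hnorm : ∀ f ∈ Jset R, ∀ h ∈ H, ∀ w ∈ Jset R,
      Jcomp (Jcomp h f) w = Jcomp f h → w ∈ H) :
    (∀ n : ℕ, 1 ≤ n → hSet H (n + 1) ⊆ hSet H (n + 2)) ∧
    hSet H 1 ⊆ hSet H 3 ∧
    (∀ n : ℕ, 1 ≤ n → ∀ α ∈ hSet H n, ∀ β γ : R, β * α * γ ∈ hSet H (n + 2)) :=
  ⟨fun _ hn => hSet_subset_hSet_succ K hHJ hnorm hn, hSet_one_subset_hSet_three hHJ hnorm,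
    fun _ hn _ hα => mul_mem_hSet_add_two K hHJ hHt hHmul hHld hnorm hn hα⟩

/-- If `H` is a subloop of `𝒥(R)` with `[𝒥(R),H] ⊆ H`, then
`𝔥_{n+1}(H) ⊆ 𝔥_{n+2}(H)` for `n ≥ 1`, `𝔥_1(H) ⊆ 𝔥_3(H)`, and
`R·𝔥_n(H)·R ⊆ 𝔥_{n+2}(H)`. -/
theorem statement9 (K : Type*) [Field K] [CharZero K]
    (R : Type*) [Ring R] [Algebra K R] (H : Set (PowerSeries R))
    (hHJ : H ⊆ Jset R) (hHt : (X : PowerSeries R) ∈ H)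
    (hHmul : ∀ f ∈ H, ∀ g ∈ H, Jcomp f g ∈ H)
    (hHld : ∀ f ∈ H, ∀ g ∈ H, ∀ w ∈ Jset R, Jcomp f w = g → w ∈ H)
    (hHrd : ∀ f ∈ H, ∀ g ∈ H, ∀ w ∈ Jset R, Jcomp w g = f → w ∈ H)
    (hnorm : ∀ f ∈ Jset R, ∀ h ∈ H, ∀ w ∈ Jset R,
      Jcomp (Jcomp h f) w = Jcomp f h → w ∈ H) :
    (∀ n : ℕ, 1 ≤ n → hSet H (n + 1) ⊆ hSet H (n + 2)) ∧
    hSet H 1 ⊆ hSet H 3 ∧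
    (∀ n : ℕ, 1 ≤ n → ∀ α ∈ hSet H n, ∀ β γ : R, β * α * γ ∈ hSet H (n + 2)) :=
  statement9_general K R H hHJ hHt hHmul hHld hnorm
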